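/- Let π : Ã* → G and π' : Ã'* → G be m-epis, for finite alphabets A and A'. If there exists a Stallings section for π, then there exists a Stallings section for π'. -/

import Mathlib

/-!  Common framework: words over an involutive alphabet Ã = A ∪ A⁻¹ (modelled as
`α × Bool`), free reduction, matched epimorphisms, Stallings sections and
Ã-automata, following Silva–Soler-Escrivà–Ventura. -/

/-- A word over the involutive alphabet Ã = A ∪ A⁻¹: the letter `(a, tt)` denotes
`a` and `(a, ff)` denotes `a⁻¹` (the `FreeGroup` convention). -/
abbrev Word (α : Type) : Type := List (α × Bool)

namespace Stallings

instance {β : Type} : HasSubset (Language β) := ⟨fun L M => ∀ w ∈ L, w ∈ M⟩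
instance {β : Type} : Union (Language β) := ⟨fun L M => {w | w ∈ L ∨ w ∈ M}⟩
instance {β : Type} : Inter (Language β) := ⟨fun L M => {w | w ∈ L ∧ w ∈ M}⟩
instance {β : Type} : EmptyCollection (Language β) := ⟨(∅ : Set (List β))⟩

variable {α : Type} {G : Type} [Group G]

/-- The formal inverse of a letter of Ã. -/
def letterInv (x : α × Bool) : α × Bool := (x.1, !x.2)

/-- The formal inverse `w⁻¹` of a word over Ã. -/
def wordInv (w : Word α) : Word α := (w.map letterInv).reverse

/-- The free reduction `w̄` of a word over Ã (iterated deletion of factors `a a⁻¹`). -/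
noncomputable def redW (w : Word α) : Word α :=
  letI := Classical.decEq α
  FreeGroup.reduce w

/-- The reduction `L̄` of a language over Ã. -/
noncomputable def red (L : Language (α × Bool)) : Language (α × Bool) :=
  redW '' L

/-- The set `R_A` of reduced words over Ã. -/
noncomputable def Reduced : Language (α × Bool) := {w | redW w = w}

/-- Evaluation of a monoid homomorphism `π : Ã* → G` at a word. -/
def ev (π : FreeMonoid (α × Bool) →* G) (w : Word α) : G :=
  π (FreeMonoid.ofList w)

/-- The image of a language under (evaluation of) `π`. -/
def evImg (π : FreeMonoid (α × Bool) →* G) (L : Language (α × Bool)) : Set G :=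
  {g | ∃ w ∈ L, ev π w = g}

/-- A matched epimorphism (m-epi) `π : Ã* → G`: a surjective monoid homomorphism
sending formal inverses to inverses. -/
structure IsMEpi (π : FreeMonoid (α × Bool) →* G) : Prop where
  surjective : Function.Surjective π
  matched : ∀ (a : α) (b : Bool),
    π (FreeMonoid.of (a, !b)) = (π (FreeMonoid.of (a, b)))⁻¹

/-- `S_X = Xπ⁻¹ ∩ S`, for `X ⊆ G`. -/
def sub (S : Language (α × Bool)) (π : FreeMonoid (α × Bool) →* G) (X : Set G) :
    Language (α × Bool) :=
  {w ∈ S | ev π w ∈ X}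

/-- A Stallings section for an m-epi `π : Ã* → G`: a regular section `S ⊆ R_A`
such that each `S_g` is regular (S1), and `S_{gh} ⊆ (S_g S_h)‾` (S2). -/
structure IsStallingsSection (π : FreeMonoid (α × Bool) →* G)
    (S : Language (α × Bool)) : Prop where
  regular : S.IsRegular
  reduced : S ⊆ Reduced
  inv_mem : ∀ w ∈ S, wordInv w ∈ S
  exists_rep : ∀ g : G, ∃ w ∈ S, ev π w = g
  s1 : ∀ g : G, (sub S π {g}).IsRegular
  s2 : ∀ g h : G, sub S π {g * h} ⊆ red (sub S π {g} * sub S π {h})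

/-- A group has a Stallings section if some m-epi onto it (from the free monoid on
an involutive finite alphabet) admits a Stallings section. -/
def HasStallingsSection (G : Type) [Group G] : Prop :=
  ∃ (α : Type) (π : FreeMonoid (α × Bool) →* G) (S : Language (α × Bool)),
    Finite α ∧ IsMEpi π ∧ IsStallingsSection π S

/-- `Pref L`: the set of prefixes of words of `L`. -/
def Pref (L : Language (α × Bool)) : Language (α × Bool) :=
  {u | ∃ v, u ++ v ∈ L}

/-- An extendable Stallings section: every `u ∈ S` admits a reduced word `v` with
`u vⁿ ∈ S` for all `n` and `u ∈ Pref (S_{(u vⁿ u⁻¹)π})` for almost all `n`. -/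
def Extendable (π : FreeMonoid (α × Bool) →* G) (S : Language (α × Bool)) : Prop :=
  ∀ u ∈ S, ∃ v : Word α, v ∈ Reduced ∧
    (∀ n : ℕ, u ++ (List.replicate n v).flatten ∈ S) ∧
    ∃ N : ℕ, ∀ n ≥ N, u ∈ Pref (sub S π {ev π u * (ev π v) ^ n * (ev π u)⁻¹})

/-- An Ã-automaton with state type `Q`, initial state `start`, terminal states
`accept` and edge set `edges`. -/
structure Automaton (β : Type) (Q : Type) where
  start : Q
  accept : Set Q
  edges : Set (Q × β × Q)

namespace Automaton

variable {β Q : Type}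

/-- `M.Path p w q`: there is a path from `p` to `q` labelled `w`. -/
inductive Path (M : Automaton β Q) : Q → List β → Q → Prop
  | nil (q : Q) : Path M q [] q
  | cons {p q r : Q} {a : β} {w : List β} :
      (p, a, q) ∈ M.edges → Path M q w r → Path M p (a :: w) r

/-- The language recognized by an automaton. -/
def lang (M : Automaton β Q) : Language β :=
  {w | ∃ t ∈ M.accept, M.Path M.start w t}

/-- A trim automaton: every state lies on some successful path. -/
def Trim (M : Automaton β Q) : Prop :=
  ∀ q : Q, ∃ (u v : List β) (t : Q), t ∈ M.accept ∧ M.Path M.start u q ∧ M.Path q v t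

/-- An involutive Ã-automaton. -/
def Involutive {α : Type} (M : Automaton (α × Bool) Q) : Prop :=
  ∀ p a q, (p, a, q) ∈ M.edges → (q, letterInv a, p) ∈ M.edges

/-- A deterministic automaton. -/
def Deterministic (M : Automaton β Q) : Prop :=
  ∀ p a q q', (p, a, q) ∈ M.edges → (p, a, q') ∈ M.edges → q = q'

/-- An inverse automaton: involutive, deterministic, trim, with a single
terminal state. -/
def IsInverse {α : Type} (M : Automaton (α × Bool) Q) : Prop :=
  M.Involutive ∧ M.Deterministic ∧ M.Trim ∧ ∃ t : Q, M.accept = {t}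

/-- The automaton obtained by identifying the states `p` and `q` (the quotient is
realized on the same state type, redirecting `q` to `p`). -/
def merge [DecidableEq Q] (M : Automaton β Q) (p q : Q) : Automaton β Q :=
  let f : Q → Q := fun x => if x = q then p else x
  { start := f M.start
    accept := f '' M.accept
    edges := {e | ∃ e' ∈ M.edges, e = (f e'.1, e'.2.1, f e'.2.2)} }

end Automaton

end Stallings

/-! Lift `π` through `π'`: send each letter `a` of `A` to a word over `Ã'` with the same image in
`G`, and `a⁻¹` to the formal inverse of that word. The resulting substitution `φ` satisfies
`φπ' = π` and respects free reduction, so `S' = (Sφ)‾` is closed under inversion, covers `G`,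
and `S'_g = (S_g φ)‾` for every `g`, from which (S2) transfers directly. Regularity of `S'` and of
each `S'_g` holds because regular languages are closed under substitution and, by Benois'
theorem, under free reduction. -/

theorem List.reduceOption_map_some {α : Type*} (l : List α) : (l.map some).reduceOption = l := by
  induction l with
  | nil => rfl
  | cons a l ih => rw [List.map_cons, List.reduceOption_cons_of_some, ih]

theorem NFA.isRegular_accepts {α σ : Type} [Finite σ] (M : NFA α σ) : M.accepts.IsRegular := by
  classical
  have := Fintype.ofFinite σ
  exact ⟨Set σ, inferInstance, M.toDFA, M.toDFA_correct⟩

theorem NFA.mem_acceptsFrom_iff_exists {α σ : Type} {M : NFA α σ} {S : Set σ} {x : List α} :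
    x ∈ M.acceptsFrom S ↔ ∃ s ∈ S, x ∈ M.acceptsFrom {s} := by
  simp only [NFA.mem_acceptsFrom, NFA.mem_evalFrom_iff_exists (S := S)]
  grind

theorem NFA.cons_mem_acceptsFrom_singleton {α σ : Type} {M : NFA α σ} {s : σ} {a : α}
    {x : List α} : a :: x ∈ M.acceptsFrom {s} ↔ ∃ t ∈ M.step s a, x ∈ M.acceptsFrom {t} := by
  rw [NFA.cons_mem_acceptsFrom, NFA.stepSet_singleton, NFA.mem_acceptsFrom_iff_exists]

namespace DFA

variable {α β σ : Type} (M : DFA α σ) (f : α → List β)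

abbrev PendingSuffix : Type := {s : List β // s = [] ∨ ∃ a, s <:+ f a}

instance [Finite α] : Finite (PendingSuffix f) := by
  refine Set.Finite.to_subtype (((Set.finite_range f).biUnion fun w _ =>
    (w.tails.finite_toSet)).insert [] |>.subset ?_)
  rintro s (rfl | ⟨a, ha⟩)
  · exact Set.mem_insert _ _
  · exact Set.mem_insert_of_mem _
      (Set.mem_biUnion (Set.mem_range_self a) ((List.mem_tails _ _).2 ha))

/-- In state `(q, s)` the word `s` is still to be emitted; once it is empty, an ε-move reads a
letter `a` in `M` and schedules `f a`. -/
def flatMapεNFA : εNFA β (σ × PendingSuffix f) where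
  step p
    | none => {p' | p.2.1 = [] ∧ ∃ a, p'.1 = M.step p.1 a ∧ p'.2.1 = f a}
    | some b => {p' | p'.1 = p.1 ∧ p.2.1 = b :: p'.2.1}
  start := {p | p.1 = M.start ∧ p.2.1 = []}
  accept := {p | p.1 ∈ M.accept ∧ p.2.1 = []}

theorem flatMapεNFA_isPath_emit (q : σ) :
    ∀ (s : List β) (hs : s = [] ∨ ∃ a, s <:+ f a),
      (M.flatMapεNFA f).IsPath (q, ⟨s, hs⟩) (q, ⟨[], Or.inl rfl⟩) (s.map some)
  | [], _ => .nil _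
  | b :: s, hs => by
    have hs' : s = [] ∨ ∃ a, s <:+ f a := by
      obtain h | ⟨a, ha⟩ := hs
      · exact absurd h (List.cons_ne_nil b s)
      · exact .inr ⟨a, (List.suffix_cons b s).trans ha⟩
    exact .cons (q, ⟨s, hs'⟩) _ _ (some b) _ ⟨rfl, rfl⟩ (flatMapεNFA_isPath_emit q s hs')

theorem flatMapεNFA_isPath_of_evalFrom (w : List α) (q : σ) :
    ∃ x, (M.flatMapεNFA f).IsPath (q, ⟨[], Or.inl rfl⟩) (M.evalFrom q w, ⟨[], Or.inl rfl⟩) x ∧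
      x.reduceOption = w.flatMap f := by
  induction w generalizing q with
  | nil => exact ⟨[], .nil _, rfl⟩
  | cons a w ih =>
    obtain ⟨x, hx, hred⟩ := ih (M.step q a)
    have hfa : f a = [] ∨ ∃ a', f a <:+ f a' := .inr ⟨a, List.suffix_refl _⟩
    refine ⟨none :: ((f a).map some ++ x), .cons (M.step q a, ⟨f a, hfa⟩) _ _ none _
      ⟨rfl, a, rfl, rfl⟩ ((εNFA.isPath_append _).2 ⟨_, flatMapεNFA_isPath_emit M f _ _ hfa, hx⟩), ?_⟩
    rw [List.reduceOption_cons_of_none, List.reduceOption_append, List.reduceOption_map_some, hred,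
      List.flatMap_cons]

theorem evalFrom_of_flatMapεNFA_isPath {p p' : σ × PendingSuffix f} {x : List (Option β)}
    (h : (M.flatMapεNFA f).IsPath p p' x) (hp' : p'.2.1 = []) :
    ∃ w, M.evalFrom p.1 w = p'.1 ∧ x.reduceOption = p.2.1 ++ w.flatMap f := by
  induction h with
  | nil p => exact ⟨[], rfl, by simp [hp']⟩
  | cons t s u a x hstep _ ih =>
    obtain ⟨w, hw, hred⟩ := ih hp'
    cases a with
    | none =>
      obtain ⟨hs, a, ht1, ht2⟩ := hstep
      exact ⟨a :: w, by rw [DFA.evalFrom_cons, ← ht1, hw], by simp [hred, hs, ht2]⟩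
    | some b =>
      obtain ⟨ht1, hs⟩ := hstep
      exact ⟨w, by rw [← ht1, hw], by simp [hred, hs]⟩

theorem flatMapεNFA_accepts : (M.flatMapεNFA f).accepts = (·.flatMap f) '' M.accepts := by
  ext v
  rw [εNFA.mem_accepts_iff_exists_path]
  constructor
  · rintro ⟨p, p', x, ⟨hp1, hp2⟩, ⟨hp'1, hp'2⟩, rfl, hx⟩
    obtain ⟨w, hw, hred⟩ := M.evalFrom_of_flatMapεNFA_isPath f hx hp'2
    refine ⟨w, ?_, ?_⟩
    · show M.evalFrom M.start w ∈ M.accept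
      rwa [← hp1, hw]
    · rw [hred, hp2, List.nil_append]
  · rintro ⟨w, hw : M.evalFrom M.start w ∈ M.accept, rfl⟩
    obtain ⟨x, hx, hred⟩ := M.flatMapεNFA_isPath_of_evalFrom f w M.start
    exact ⟨_, _, x, ⟨rfl, rfl⟩, ⟨hw, rfl⟩, hred, hx⟩

end DFA

theorem Language.IsRegular.image_flatMap {α β : Type} [Finite α] {L : Language α}
    (hL : L.IsRegular) (f : α → List β) : Language.IsRegular ((·.flatMap f) '' L) := by
  obtain ⟨σ, _, M, rfl⟩ := hL
  rw [← M.flatMapεNFA_accepts f, ← εNFA.toNFA_correct]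
  exact NFA.isRegular_accepts _

open FreeGroup

namespace Stallings

section

variable {α σ : Type}

theorem redW_eq_reduce [DecidableEq α] (w : Word α) : redW w = reduce w := by
  unfold redW
  congr
  exact Subsingleton.elim _ _

theorem mem_reduced_iff {w : Word α} : w ∈ Reduced ↔ IsReduced w := by
  classical
  rw [isReduced_iff_reduce_eq, ← redW_eq_reduce]
  rfl

def reducedNFA : NFA (α × Bool) (Option (α × Bool)) where
  step s y := {t | t = some y ∧ ∀ x ∈ s, x.1 = y.1 → x.2 = y.2}
  start := {none}
  accept := Set.univ

theorem mem_reducedNFA_acceptsFrom {s : Option (α × Bool)} {w : Word α} :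
    w ∈ reducedNFA.acceptsFrom {s} ↔ IsReduced (s.toList ++ w) := by
  induction w generalizing s with
  | nil => cases s <;> simp [reducedNFA, IsReduced.nil, IsReduced.singleton]
  | cons y w ih =>
    rw [NFA.cons_mem_acceptsFrom_singleton]
    constructor
    · rintro ⟨_, ⟨rfl, hy⟩, hw⟩
      cases s with
      | none => exact ih.1 hw
      | some x => exact isReduced_cons_cons.2 ⟨hy x rfl, ih.1 hw⟩
    · intro h
      cases s with
      | none => exact ⟨some y, ⟨rfl, nofun⟩, ih.2 h⟩
      | some x =>
        obtain ⟨hxy, hw⟩ := isReduced_cons_cons.1 h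
        exact ⟨some y, ⟨rfl, fun _ hx => Option.some_inj.1 hx ▸ hxy⟩, ih.2 hw⟩

theorem isRegular_reduced [Finite α] : (Reduced : Language (α × Bool)).IsRegular := by
  have : (Reduced : Language (α × Bool)) = reducedNFA.accepts := by
    ext w
    rw [mem_reduced_iff, NFA.accepts_eq_acceptsFrom_start]
    exact (mem_reducedNFA_acceptsFrom (s := none)).symm
  rw [this]
  exact NFA.isRegular_accepts _

def benoisNFA (M : DFA (α × Bool) σ) : NFA (α × Bool) σ where
  step q y := {q' | ∃ w, M.evalFrom q w = q' ∧ Red w [y]}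
  start := {M.start}
  accept := {q | ∃ w ∈ M.acceptsFrom q, Red w []}

theorem mem_benoisNFA_acceptsFrom {M : DFA (α × Bool) σ} {q : σ} {v : Word α} :
    v ∈ (benoisNFA M).acceptsFrom {q} ↔ ∃ w ∈ M.acceptsFrom q, Red w v := by
  induction v generalizing q with
  | nil => simp [benoisNFA]
  | cons y v ih =>
    rw [NFA.cons_mem_acceptsFrom_singleton]
    constructor
    · rintro ⟨_, ⟨w₁, rfl, h₁⟩, hv⟩
      obtain ⟨w₂, hw₂, h₂⟩ := ih.1 hv
      refine ⟨w₁ ++ w₂, ?_, Red.append_append h₁ h₂⟩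
      rwa [DFA.mem_acceptsFrom, DFA.evalFrom_of_append]
    · rintro ⟨w, hw, hred⟩
      obtain ⟨w₁, w₂, rfl, h₁, h₂⟩ := (Red.to_append_iff (L₁ := [y]) (L₂ := v)).1 hred
      refine ⟨_, ⟨w₁, rfl, h₁⟩, ih.2 ⟨w₂, ?_, h₂⟩⟩
      rwa [DFA.mem_acceptsFrom, ← DFA.evalFrom_of_append]

theorem red_accepts_eq_benoisNFA_accepts_inf (M : DFA (α × Bool) σ) :
    red M.accepts = (benoisNFA M).accepts ⊓ Reduced := by
  classical
  ext v
  change v ∈ red M.accepts ↔ v ∈ (benoisNFA M).acceptsFrom {M.start} ∧ v ∈ Reduced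
  rw [mem_benoisNFA_acceptsFrom, mem_reduced_iff]
  constructor
  · rintro ⟨w, hw, rfl⟩
    rw [redW_eq_reduce]
    exact ⟨⟨w, hw, reduce.red⟩, isReduced_iff_reduce_eq.2 reduce.idem⟩
  · rintro ⟨⟨w, hw, hred⟩, hv⟩
    refine ⟨w, hw, ?_⟩
    rw [redW_eq_reduce, reduce.eq_of_red hred, isReduced_iff_reduce_eq.1 hv]

theorem isRegular_red [Finite α] {L : Language (α × Bool)} (hL : L.IsRegular) :
    (red L).IsRegular := by
  obtain ⟨σ, _, M, rfl⟩ := hL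
  rw [red_accepts_eq_benoisNFA_accepts_inf]
  exact (NFA.isRegular_accepts _).inf isRegular_reduced

end

section

variable {α α' G : Type} [Group G]

theorem map_ofList_eq_of_red {H : Type*} [Group H] {φ : FreeMonoid (α × Bool) →* H}
    (hφ : ∀ a b, φ (.of (a, !b)) = (φ (.of (a, b)))⁻¹) {u v : Word α} (h : Red u v) :
    φ (.ofList u) = φ (.ofList v) := by
  induction h with
  | refl => rfl
  | tail _ hstep ih =>
    rw [ih]
    obtain ⟨⟩ := hstep
    simp [FreeMonoid.ofList_append, FreeMonoid.ofList_cons, hφ]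

theorem red_append_wordInv (w : Word α) : Red (w ++ wordInv w) [] := by
  classical
  have := reduce_invRev_left_cancel (L := invRev w)
  rw [invRev_invRev] at this
  exact this ▸ reduce.red

theorem red_flatMap {f : α × Bool → Word α'} (hf : ∀ x, f (letterInv x) = wordInv (f x))
    {u v : Word α} (h : Red u v) : Red (u.flatMap f) (v.flatMap f) := by
  classical
  induction h with
  | refl => exact Red.refl
  | tail _ hstep ih =>
    refine ih.trans ?_
    rcases hstep with @⟨L₁, L₂, x, b⟩
    have hcancel : Red (f (x, b) ++ f (x, !b)) [] := hf (x, b) ▸ red_append_wordInv _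
    simpa [List.flatMap_append, List.append_assoc] using
      Red.append_append (Red.refl (L := L₁.flatMap f)) (Red.append_append hcancel Red.refl)

theorem ev_redW {π : FreeMonoid (α × Bool) →* G}
    (hπ : ∀ a b, π (.of (a, !b)) = (π (.of (a, b)))⁻¹) (w : Word α) :
    ev π (redW w) = ev π w := by
  classical
  rw [redW_eq_reduce]
  exact (map_ofList_eq_of_red hπ reduce.red).symm

theorem ev_append (π : FreeMonoid (α × Bool) →* G) (u v : Word α) :
    ev π (u ++ v) = ev π u * ev π v :=
  map_mul π _ _

theorem ev_wordInv {π : FreeMonoid (α × Bool) →* G}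
    (hπ : ∀ a b, π (.of (a, !b)) = (π (.of (a, b)))⁻¹) (w : Word α) :
    ev π (wordInv w) = (ev π w)⁻¹ := by
  refine eq_inv_of_mul_eq_one_right ?_
  rw [← ev_append, ev, map_ofList_eq_of_red hπ (red_append_wordInv w)]
  exact map_one π

theorem redW_redW (w : Word α) : redW (redW w) = redW w := by
  classical
  simp only [redW_eq_reduce, reduce.idem]

theorem redW_append_redW (u v : Word α) : redW (redW u ++ redW v) = redW (u ++ v) := by
  classical
  simp only [redW_eq_reduce, reduce_append_reduce_reduce]

theorem redW_wordInv (w : Word α) : redW (wordInv w) = wordInv (redW w) := by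
  classical
  simp only [redW_eq_reduce]
  exact reduce_invRev

theorem redW_flatMap_redW {f : α × Bool → Word α'} (hf : ∀ x, f (letterInv x) = wordInv (f x))
    (w : Word α) : redW ((redW w).flatMap f) = redW (w.flatMap f) := by
  classical
  simp only [redW_eq_reduce]
  exact (reduce.eq_of_red (red_flatMap hf reduce.red)).symm

theorem wordInv_flatMap {f : α × Bool → Word α'} (hf : ∀ x, f (letterInv x) = wordInv (f x))
    (w : Word α) : wordInv (w.flatMap f) = (wordInv w).flatMap f := by
  induction w with
  | nil => rfl
  | cons x w ih =>
    change invRev _ = (invRev _).flatMap f at ih ⊢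
    rw [List.flatMap_cons, invRev_append, ih, invRev_cons, List.flatMap_append,
      show invRev [x] = [letterInv x] from rfl, List.flatMap_singleton, hf]
    rfl

theorem ev_flatMap {π : FreeMonoid (α × Bool) →* G} {π' : FreeMonoid (α' × Bool) →* G}
    {f : α × Bool → Word α'} (hf : ∀ x, ev π' (f x) = π (.of x)) (w : Word α) :
    ev π' (w.flatMap f) = ev π w := by
  induction w with
  | nil => simp [ev]
  | cons x w ih =>
    rw [List.flatMap_cons, ev_append, hf, ih]
    exact (_root_.map_mul π _ _).symm

end

section

variable {α α' G : Type} [Group G] {π : FreeMonoid (α × Bool) →* G}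
  {π' : FreeMonoid (α' × Bool) →* G} {f : α × Bool → Word α'}

theorem sub_red_image_flatMap (hπ' : ∀ a b, π' (.of (a, !b)) = (π' (.of (a, b)))⁻¹)
    (hf : ∀ x, ev π' (f x) = π (.of x)) (S : Language (α × Bool)) (X : Set G) :
    sub (red ((·.flatMap f) '' S)) π' X = red ((·.flatMap f) '' sub S π X) := by
  ext v
  constructor
  · rintro ⟨⟨_, ⟨u, hu, rfl⟩, rfl⟩, hX⟩
    rw [ev_redW hπ', ev_flatMap hf] at hX
    exact ⟨_, ⟨u, ⟨hu, hX⟩, rfl⟩, rfl⟩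
  · rintro ⟨_, ⟨u, ⟨hu, hX⟩, rfl⟩, rfl⟩
    refine ⟨⟨_, ⟨u, hu, rfl⟩, rfl⟩, ?_⟩
    rwa [ev_redW hπ', ev_flatMap hf]

theorem IsStallingsSection.red_image_flatMap [Finite α] [Finite α']
    (hπ' : ∀ a b, π' (.of (a, !b)) = (π' (.of (a, b)))⁻¹)
    (hf_inv : ∀ x, f (letterInv x) = wordInv (f x)) (hf : ∀ x, ev π' (f x) = π (.of x))
    {S : Language (α × Bool)} (hS : IsStallingsSection π S) :
    IsStallingsSection π' (red ((·.flatMap f) '' S)) where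
  regular := isRegular_red (hS.regular.image_flatMap f)
  reduced := by
    rintro _ ⟨w, -, rfl⟩
    exact redW_redW w
  inv_mem := by
    rintro _ ⟨_, ⟨u, hu, rfl⟩, rfl⟩
    refine ⟨_, ⟨wordInv u, hS.inv_mem u hu, rfl⟩, ?_⟩
    simp only [← wordInv_flatMap hf_inv, redW_wordInv]
  exists_rep g := by
    obtain ⟨u, hu, rfl⟩ := hS.exists_rep g
    exact ⟨_, ⟨_, ⟨u, hu, rfl⟩, rfl⟩, by rw [ev_redW hπ', ev_flatMap hf]⟩
  s1 g := by
    rw [sub_red_image_flatMap hπ' hf]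
    exact isRegular_red ((hS.s1 g).image_flatMap f)
  s2 g h := by
    simp only [sub_red_image_flatMap hπ' hf]
    rintro _ ⟨_, ⟨u, hu, rfl⟩, rfl⟩
    obtain ⟨_, hab, hu'⟩ := hS.s2 g h u hu
    obtain ⟨a, ha, b, hb, rfl⟩ := Language.mem_mul.1 hab
    refine ⟨_, Language.mem_mul.2 ⟨_, ⟨_, ⟨a, ha, rfl⟩, rfl⟩, _, ⟨_, ⟨b, hb, rfl⟩, rfl⟩, rfl⟩, ?_⟩
    rw [redW_append_redW, ← List.flatMap_append, ← hu', redW_flatMap_redW hf_inv]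

end

end Stallings

open Stallings in
/-- The existence of a Stallings section is independent of the m-epi:
if `π : Ã* → G` and `π' : Ã'* → G` are m-epis and `π` admits a Stallings section,
then so does `π'`. -/
theorem stallings_section_independence {α α' G : Type} [Finite α] [Finite α'] [Group G]
    (π : FreeMonoid (α × Bool) →* G) (hπ : IsMEpi π)
    (π' : FreeMonoid (α' × Bool) →* G) (hπ' : IsMEpi π')
    (h : ∃ S : Language (α × Bool), IsStallingsSection π S) :
    ∃ S' : Language (α' × Bool), IsStallingsSection π' S' := by
  obtain ⟨S, hS⟩ := h
  choose rep hrep using fun a => hπ'.surjective (π (.of (a, true)))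
  let f : α × Bool → Word α' := fun x =>
    bif x.2 then FreeMonoid.toList (rep x.1) else wordInv (FreeMonoid.toList (rep x.1))
  have hf_inv : ∀ x, f (letterInv x) = wordInv (f x) := by
    rintro ⟨a, _ | _⟩
    · exact (invRev_invRev (L₁ := FreeMonoid.toList (rep a))).symm
    · rfl
  have hf : ∀ x, ev π' (f x) = π (.of x) := by
    rintro ⟨a, _ | _⟩
    · rw [show ((a, false) : α × Bool) = (a, !true) from rfl, hπ.matched a true, ← hrep a]
      exact ev_wordInv hπ'.matched _
    · exact hrep a
  exact ⟨_, hS.red_image_flatMap hπ'.matched hf_inv hf⟩
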